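/- The operator D_c satisfies D_c² = 0, both as an operator on the Weil algebra 𝒲 and as an operator on B. -/

import Mathlib

open scoped TensorProduct
noncomputable section

abbrev Vc (r : ℕ) := Fin r → ℂ
abbrev Pc (r : ℕ) := MvPolynomial (Fin r) ℂ
abbrev Ec (r : ℕ) := ExteriorAlgebra ℂ (Vc r)
abbrev Wc (r : ℕ) := Ec r ⊗[ℂ] Pc r

variable {r : ℕ}

/-- The standard symmetric bilinear form on `ℂ^r`. -/
def bil (x y : Vc r) : ℂ := ∑ i, x i * y i

/-- A vector of `ℂ^r` viewed as a degree-one polynomial. -/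
def linP (v : Vc r) : Pc r := ∑ i, MvPolynomial.C (v i) * MvPolynomial.X i

/-- The action of a linear automorphism of `V` on polynomials (i.e. on `S(V)`). -/
def pAct (g : Vc r ≃ₗ[ℂ] Vc r) : Pc r →ₐ[ℂ] Pc r :=
  MvPolynomial.aeval fun i => linP (g (Pi.single i 1))

/-- The action of a linear automorphism of `V` on the exterior algebra of `V`. -/
def eAct (g : Vc r ≃ₗ[ℂ] Vc r) : Ec r →ₐ[ℂ] Ec r :=
  ExteriorAlgebra.map (g : Vc r →ₗ[ℂ] Vc r)

/-- The diagonal action of a linear automorphism of `V` on the Weil algebra `⋀V ⊗ S(V)`. -/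
def wAct (g : Vc r ≃ₗ[ℂ] Vc r) : Wc r →ₐ[ℂ] Wc r :=
  Algebra.TensorProduct.map (eAct g) (pAct g)

/-- A vector of `V` viewed inside the exterior algebra. -/
def exti (v : Vc r) : Ec r := ExteriorAlgebra.ι ℂ v

/-- The de Rham differential on the Weil algebra: `d(q ⊗ k) = ∑ᵢ (xᵢ ∧ q) ⊗ ∂k/∂xᵢ`. -/
def deRham : Wc r →ₗ[ℂ] Wc r :=
  ∑ i, TensorProduct.map (LinearMap.mulLeft ℂ (exti (Pi.single i 1))) ((MvPolynomial.pderiv i).toLinearMap)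

/-- The directional derivative `∂_v`. -/
def dirDeriv (v : Vc r) : Pc r →ₗ[ℂ] Pc r := ∑ i, v i • (MvPolynomial.pderiv i).toLinearMap

/-- `g` is a reflection with root `a`, with respect to the standard bilinear form. -/
def IsReflRoot (g : Vc r ≃ₗ[ℂ] Vc r) (a : Vc r) : Prop :=
  a ≠ 0 ∧ g a = -a ∧ ∀ v, bil a v = 0 → g v = v

/-- The relation whose associated two-sided ideal is `𝒲J`, the ideal generated by the `ψᵢ`. -/
def relJ (ψ : Fin r → Pc r) : Wc r → Wc r → Prop :=
  fun x y => (∃ i, x = (1 : Ec r) ⊗ₜ[ℂ] ψ i) ∧ y = 0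

/-- `B = ⋀V ⊗ H = 𝒲/𝒲J`. -/
abbrev Bc (ψ : Fin r → Pc r) := RingQuot (relJ ψ)

/-- The quotient map `π : 𝒲 → B`. -/
def πB (ψ : Fin r → Pc r) : Wc r →ₐ[ℂ] Bc ψ := RingQuot.mkAlgHom ℂ (relJ ψ)

/-- The Solomon elements `pᵢ = π(d(1 ⊗ ψᵢ))`. -/
def pSol (ψ : Fin r → Pc r) (i : Fin r) : Bc ψ := πB ψ (deRham ((1 : Ec r) ⊗ₜ[ℂ] ψ i))

/-- The covariants `fᵢ(v) = π(1 ⊗ ∂_v ψᵢ)`. -/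
def fcov (ψ : Fin r → Pc r) (i : Fin r) (v : Vc r) : Bc ψ :=
  πB ψ ((1 : Ec r) ⊗ₜ[ℂ] dirDeriv v (ψ i))

/-- The `B`-valued pairing `E(φ, χ) = ∑ᵢ φ(xᵢ)·χ(xᵢ)` on maps `V → B`. -/
def Eform (ψ : Fin r → Pc r) (φ χ : Vc r → Bc ψ) : Bc ψ :=
  ∑ i, φ (Pi.single i 1) * χ (Pi.single i 1)


/-- The covariants `uᵢ = (r/(2|T|))·D∘fᵢ`, where `D` (given here as the operator `DB` on `B`
induced by `D = ∑_{s ∈ T} ∇ₛ`) is the Dunkl differential with `c = 1`. -/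
def ucov (ψ : Fin r → Pc r) (T : Finset (Vc r ≃ₗ[ℂ] Vc r)) (DB : Bc ψ →ₗ[ℂ] Bc ψ)
    (i : Fin r) (v : Vc r) : Bc ψ :=
  ((r : ℂ) / (2 * T.card)) • DB (fcov ψ i v)


/-!
Each `∇ₛ` kills `1`, anticommutes with left multiplication by `v ⊗ 1`, and satisfies a twisted
Leibniz rule `∇ₛ((1 ⊗ v)ω) = (1 ⊗ v)∇ₛω + ⟨αₛ^∨, v⟩ (αₛ ⊗ 1)·sω`. Summing, the commutator
`[D_c, 1 ⊗ v]` is `∑_t c(t)⟨α_t^∨, v⟩ (α_t ⊗ 1)·t`. Conjugation by a reflection `t` permutes `T`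
and preserves `c`, so `D_c` commutes with `t`, and hence anticommutes with that commutator. Thus
`D_c²` commutes with left multiplication by the generators `v ⊗ 1`, `1 ⊗ v` of `𝒲`, so
`D_c² ω = ω · D_c²(1) = 0`. The operator on `B` is induced from `𝒲`, so the identity descends.
-/

lemma Algebra.TensorProduct.adjoin_image_includeLeft_union_image_includeRight
    {R A B : Type*} [CommSemiring R] [Semiring A] [Semiring B] [Algebra R A] [Algebra R B]
    {s : Set A} {t : Set B} (hs : Algebra.adjoin R s = ⊤) (ht : Algebra.adjoin R t = ⊤) :
    Algebra.adjoin R (Algebra.TensorProduct.includeLeft (S := R) '' s ∪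
      Algebra.TensorProduct.includeRight '' t : Set (A ⊗[R] B)) = ⊤ := by
  rw [Algebra.adjoin_union, Algebra.adjoin_image, Algebra.adjoin_image, hs, ht,
    Algebra.map_top, Algebra.map_top]
  simpa using (Algebra.TensorProduct.map_range (AlgHom.id R A) (AlgHom.id R B)).symm

lemma LinearMap.eq_zero_of_map_mul_left_of_adjoin_eq_top {R A : Type*} [CommSemiring R]
    [Semiring A] [Algebra R A] (f : A →ₗ[R] A) {s : Set A} (hs : Algebra.adjoin R s = ⊤)
    (hf : ∀ x ∈ s, ∀ y, f (x * y) = x * f y) (h1 : f 1 = 0) : f = 0 := by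
  have hmul (x : A) : ∀ y, f (x * y) = x * f y := by
    have hx : x ∈ Algebra.adjoin R s := hs ▸ Algebra.mem_top
    induction hx using Algebra.adjoin_induction with
    | mem x hx => exact hf x hx
    | algebraMap k => intro y; simp only [← Algebra.smul_def, map_smul]
    | add x z _ _ hx hz => intro y; rw [add_mul, map_add, hx, hz, add_mul]
    | mul x z _ _ hx hz => intro y; rw [mul_assoc, hx, hz, mul_assoc]
  ext x
  simpa [h1] using hmul x 1

lemma bil_eq_dotProduct (x y : Vc r) : bil x y = x ⬝ᵥ y := rfl

def coroot (a v : Vc r) : ℂ := 2 * bil a v / bil a a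

namespace IsReflRoot

variable {s : Vc r ≃ₗ[ℂ] Vc r} {a : Vc r}

lemma bil_self_ne_zero (h : IsReflRoot s a) : bil a a ≠ 0 := by
  intro h0
  have hsa := h.2.2 a h0
  rw [h.2.1, neg_eq_iff_add_eq_zero, ← two_smul ℂ, smul_eq_zero] at hsa
  exact h.1 (hsa.resolve_left two_ne_zero)

lemma apply_eq (h : IsReflRoot s a) (v : Vc r) : s v = v - coroot a v • a := by
  have hb := h.bil_self_ne_zero
  set k := bil a v / bil a a
  have hperp : bil a (v - k • a) = 0 := by
    simp only [bil_eq_dotProduct, dotProduct_sub, dotProduct_smul, smul_eq_mul] at hb ⊢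
    simp only [k, bil_eq_dotProduct]
    field_simp
    ring
  have hsplit : s v = k • s a + s (v - k • a) := by
    rw [← map_smul, ← map_add, add_sub_cancel]
  rw [hsplit, h.2.2 _ hperp, h.2.1, coroot, mul_div_assoc]
  module

lemma bil_map_map (h : IsReflRoot s a) (x y : Vc r) : bil (s x) (s y) = bil x y := by
  have hb := h.bil_self_ne_zero
  simp only [h.apply_eq, coroot, bil_eq_dotProduct, dotProduct_sub, sub_dotProduct,
    dotProduct_smul, smul_dotProduct, smul_eq_mul, dotProduct_comm x a] at hb ⊢
  field_simp
  ring

lemma mul_self (h : IsReflRoot s a) : s * s = 1 := by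
  refine LinearEquiv.ext fun v => ?_
  have hb := h.bil_self_ne_zero
  change s (s v) = v
  rw [h.apply_eq (s v), h.apply_eq v]
  simp only [coroot, bil_eq_dotProduct, dotProduct_sub, dotProduct_smul, smul_eq_mul] at hb ⊢
  field_simp
  module

lemma inv_eq (h : IsReflRoot s a) : s⁻¹ = s :=
  inv_eq_of_mul_eq_one_right h.mul_self

lemma exists_eq_smul_of_apply_eq_neg (h : IsReflRoot s a) {w : Vc r} (hw : s w = -w) :
    ∃ k : ℂ, w = k • a := by
  refine ⟨coroot a w / 2, ?_⟩
  have hsw := h.apply_eq w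
  rw [hw] at hsw
  linear_combination (norm := module) (-(1 / 2 : ℂ)) • hsw

lemma conj (hs : IsReflRoot s a) {t : Vc r ≃ₗ[ℂ] Vc r}
    (ht : ∀ x y, bil (t x) (t y) = bil x y) : IsReflRoot (t⁻¹ * s * t) (t⁻¹ a) := by
  refine ⟨by simpa using hs.1, by simp [hs.2.1], fun v hv => ?_⟩
  have hperp : bil a (t v) = 0 := by
    rw [← hv, ← ht (t⁻¹ a) v, LinearEquiv.coe_inv, LinearEquiv.apply_symm_apply]
  simp [hs.2.2 _ hperp]

end IsReflRoot

lemma linP_eq_sum_smul (v : Vc r) : linP v = ∑ i, v i • MvPolynomial.X i := by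
  simp [linP, MvPolynomial.smul_eq_C_mul]

def linPₗ : Vc r →ₗ[ℂ] Pc r where
  toFun := linP
  map_add' x y := by simp [linP_eq_sum_smul, add_smul, Finset.sum_add_distrib]
  map_smul' k x := by simp [linP_eq_sum_smul, Finset.smul_sum, smul_smul]

lemma linP_single (i : Fin r) : linP (Pi.single i 1) = MvPolynomial.X i := by
  simp [linP_eq_sum_smul, Pi.single_apply]

lemma linP_ne_zero {v : Vc r} (hv : v ≠ 0) : linP v ≠ 0 := by
  contrapose! hv
  funext i
  simpa [linP, MvPolynomial.coeff_sum, MvPolynomial.coeff_C_mul, MvPolynomial.coeff_X,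
    Finsupp.single_eq_single_iff] using congrArg (MvPolynomial.coeff (Finsupp.single i 1)) hv

lemma pAct_linP (g : Vc r ≃ₗ[ℂ] Vc r) (v : Vc r) : pAct g (linP v) = linP (g v) := by
  have key : (pAct g).toLinearMap ∘ₗ linPₗ = linPₗ ∘ₗ (g : Vc r →ₗ[ℂ] Vc r) := by
    refine LinearMap.pi_ext' fun i => LinearMap.ext_ring ?_
    simp [linPₗ, linP_single, pAct]
  exact LinearMap.congr_fun key v

lemma pAct_X (g : Vc r ≃ₗ[ℂ] Vc r) (i : Fin r) :
    pAct g (MvPolynomial.X i) = linP (g (Pi.single i 1)) :=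
  MvPolynomial.aeval_X _ _

lemma pAct_mul (g h : Vc r ≃ₗ[ℂ] Vc r) : pAct (g * h) = (pAct g).comp (pAct h) :=
  MvPolynomial.algHom_ext fun i => by
    rw [AlgHom.comp_apply, pAct_X, pAct_X, pAct_linP, LinearEquiv.mul_apply]

lemma eAct_exti (g : Vc r ≃ₗ[ℂ] Vc r) (v : Vc r) : eAct g (exti v) = exti (g v) :=
  ExteriorAlgebra.map_apply_ι _ _

lemma eAct_mul (g h : Vc r ≃ₗ[ℂ] Vc r) : eAct (g * h) = (eAct g).comp (eAct h) :=
  (ExteriorAlgebra.map_comp_map _ _).symm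

lemma wAct_mul_apply (g h : Vc r ≃ₗ[ℂ] Vc r) (ω : Wc r) :
    wAct (g * h) ω = wAct g (wAct h ω) := by
  rw [wAct, eAct_mul, pAct_mul, Algebra.TensorProduct.map_comp]
  rfl

abbrev wSym (v : Vc r) : Wc r := (1 : Ec r) ⊗ₜ[ℂ] linP v

abbrev wExt (v : Vc r) : Wc r := exti v ⊗ₜ[ℂ] (1 : Pc r)

lemma wSym_sub (u v : Vc r) : wSym (u - v) = wSym u - wSym v := by
  change (1 : Ec r) ⊗ₜ[ℂ] linPₗ (u - v) = _
  rw [map_sub, TensorProduct.tmul_sub]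
  rfl

lemma wSym_smul (k : ℂ) (v : Vc r) : wSym (k • v) = k • wSym v := by
  change (1 : Ec r) ⊗ₜ[ℂ] linPₗ (k • v) = _
  rw [map_smul, TensorProduct.tmul_smul]
  rfl

lemma wExt_sub (u v : Vc r) : wExt (u - v) = wExt u - wExt v := by
  rw [wExt, exti, map_sub, TensorProduct.sub_tmul]
  rfl

lemma wExt_smul (k : ℂ) (v : Vc r) : wExt (k • v) = k • wExt v := by
  rw [wExt, exti, map_smul, TensorProduct.smul_tmul']
  rfl

-- `*` on `𝒲` is `Algebra.TensorProduct.instMul`, which `rw [mul_neg]` does not see through.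
lemma wmul_neg (x y : Wc r) : x * -y = -(x * y) := mul_neg x y

lemma wSym_commute (v : Vc r) (ω : Wc r) : Commute (wSym v) ω := by
  induction ω using TensorProduct.induction_on with
  | zero => exact Commute.zero_right _
  | tmul x q => simp [Commute, SemiconjBy, Algebra.TensorProduct.tmul_mul_tmul, mul_comm]
  | add x y hx hy => exact hx.add_right hy

lemma wExt_mul_self (v : Vc r) : wExt v * wExt v = 0 := by
  rw [Algebra.TensorProduct.tmul_mul_tmul, exti, ExteriorAlgebra.ι_sq_zero,
    TensorProduct.zero_tmul]

lemma wExt_mul_wExt_mul (u v : Vc r) (x : Wc r) :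
    wExt u * (wExt v * x) = -(wExt v * (wExt u * x)) := by
  rw [← mul_assoc, ← mul_assoc, eq_neg_iff_add_eq_zero, ← add_mul,
    Algebra.TensorProduct.tmul_mul_tmul, Algebra.TensorProduct.tmul_mul_tmul,
    ← TensorProduct.add_tmul, exti, exti, ExteriorAlgebra.ι_add_mul_swap,
    TensorProduct.zero_tmul, zero_mul]

lemma wAct_wSym (g : Vc r ≃ₗ[ℂ] Vc r) (v : Vc r) : wAct g (wSym v) = wSym (g v) := by
  rw [wSym, wAct, Algebra.TensorProduct.map_tmul, map_one, pAct_linP]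

lemma wAct_wExt (g : Vc r ≃ₗ[ℂ] Vc r) (v : Vc r) : wAct g (wExt v) = wExt (g v) := by
  rw [wExt, wAct, Algebra.TensorProduct.map_tmul, map_one, eAct_exti]

lemma wSym_mul_left_injective {v : Vc r} (hv : v ≠ 0) :
    Function.Injective (wSym v * · : Wc r → Wc r) := by
  have hmul : (wSym v * · : Wc r → Wc r) =
      LinearMap.lTensor (Ec r) (LinearMap.mulLeft ℂ (linP v)) := by
    funext ω
    induction ω using TensorProduct.induction_on with
    | zero => simp
    | tmul x q => simp [Algebra.TensorProduct.tmul_mul_tmul]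
    | add x y hx hy => rw [mul_add, map_add, hx, hy]
  rw [hmul]
  exact Module.Flat.lTensor_preserves_injective_linearMap _
    (mul_right_injective₀ (linP_ne_zero hv))

lemma adjoin_wExt_wSym_eq_top :
    Algebra.adjoin ℂ (Set.range (wExt (r := r)) ∪ Set.range (wSym (r := r))) = ⊤ := by
  have hgen := Algebra.TensorProduct.adjoin_image_includeLeft_union_image_includeRight
    (CliffordAlgebra.adjoin_range_ι (Q := (0 : QuadraticForm ℂ (Vc r))))
    (MvPolynomial.adjoin_range_X (σ := Fin r) (R := ℂ))
  refine top_le_iff.mp (hgen.ge.trans (Algebra.adjoin_mono (Set.union_subset_union ?_ ?_)))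
  · rintro _ ⟨_, ⟨v, rfl⟩, rfl⟩
    exact ⟨v, rfl⟩
  · rintro _ ⟨_, ⟨i, rfl⟩, rfl⟩
    exact ⟨Pi.single i 1, by rw [wSym, linP_single]; rfl⟩

/-- `N` is `∇ₛ = (a ⊗ 1)·(1 − s)/a`, pinned down by clearing the denominator `1 ⊗ a`. -/
def IsNabla (N : Wc r →ₗ[ℂ] Wc r) (s : Vc r ≃ₗ[ℂ] Vc r) (a : Vc r) : Prop :=
  ∀ ω, wSym a * N ω = wExt a * (ω - wAct s ω)

namespace IsNabla

variable {N : Wc r →ₗ[ℂ] Wc r} {s : Vc r ≃ₗ[ℂ] Vc r} {a : Vc r}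

lemma eq_of_wSym_mul_eq (hs : IsReflRoot s a) (hN : IsNabla N s a) {ω X : Wc r}
    (hX : wSym a * X = wExt a * (ω - wAct s ω)) : N ω = X :=
  wSym_mul_left_injective hs.1 ((hN ω).trans hX.symm)

lemma map_one (hs : IsReflRoot s a) (hN : IsNabla N s a) : N 1 = 0 :=
  hN.eq_of_wSym_mul_eq hs (by rw [_root_.map_one, sub_self, mul_zero, mul_zero])

lemma map_wSym_mul (hs : IsReflRoot s a) (hN : IsNabla N s a) (v : Vc r) (ω : Wc r) :
    N (wSym v * ω) = wSym v * N ω + coroot a v • (wExt a * wAct s ω) := by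
  refine hN.eq_of_wSym_mul_eq hs ?_
  have hsplit : wSym v * ω - wAct s (wSym v * ω)
      = wSym v * (ω - wAct s ω) + coroot a v • (wSym a * wAct s ω) := by
    rw [map_mul, wAct_wSym, hs.apply_eq, wSym_sub, wSym_smul, sub_mul, mul_sub, smul_mul_assoc]
    abel
  rw [hsplit, mul_add, mul_add, (wSym_commute a _).left_comm, hN, (wSym_commute v _).left_comm,
    mul_smul_comm, mul_smul_comm, (wSym_commute a _).left_comm]

lemma map_wExt_mul (hs : IsReflRoot s a) (hN : IsNabla N s a) (u : Vc r) (ω : Wc r) :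
    N (wExt u * ω) = -(wExt u * N ω) := by
  refine hN.eq_of_wSym_mul_eq hs ?_
  have hsplit : wExt u * ω - wAct s (wExt u * ω)
      = wExt u * (ω - wAct s ω) + coroot a u • (wExt a * wAct s ω) := by
    rw [map_mul, wAct_wExt, hs.apply_eq, wExt_sub, wExt_smul, sub_mul, mul_sub, smul_mul_assoc]
    abel
  rw [hsplit, mul_add, mul_smul_comm, ← mul_assoc (wExt a) (wExt a), wExt_mul_self, zero_mul,
    smul_zero, add_zero, wmul_neg, (wSym_commute a _).left_comm, hN, wExt_mul_wExt_mul, neg_neg]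

lemma of_isReflRoot (hs : IsReflRoot s a) (hN : IsNabla N s a) {b : Vc r}
    (hb : IsReflRoot s b) : IsNabla N s b := by
  obtain ⟨k, rfl⟩ := hs.exists_eq_smul_of_apply_eq_neg hb.2.1
  intro ω
  rw [wSym_smul, wExt_smul, smul_mul_assoc, smul_mul_assoc, hN]

lemma map_wAct (hs : IsReflRoot s a) (hN : IsNabla N s a) {t : Vc r ≃ₗ[ℂ] Vc r}
    {N' : Wc r →ₗ[ℂ] Wc r} (hN' : IsNabla N' (t⁻¹ * s * t) (t⁻¹ a)) (ω : Wc r) :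
    N (wAct t ω) = wAct t (N' ω) := by
  refine hN.eq_of_wSym_mul_eq hs ?_
  have h := congrArg (wAct t) (hN' ω)
  rw [map_mul, map_mul, wAct_wSym, wAct_wExt, map_sub, ← wAct_mul_apply, LinearEquiv.coe_inv,
    LinearEquiv.apply_symm_apply, show t * (t⁻¹ * s * t) = s * t by group] at h
  rwa [← wAct_mul_apply]

end IsNabla

def dunkl (T : Finset (Vc r ≃ₗ[ℂ] Vc r)) (c : (Vc r ≃ₗ[ℂ] Vc r) → ℂ)
    (nab : (Vc r ≃ₗ[ℂ] Vc r) → Wc r →ₗ[ℂ] Wc r) : Wc r →ₗ[ℂ] Wc r :=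
  ∑ s ∈ T, c s • nab s

def dunklCommutator (T : Finset (Vc r ≃ₗ[ℂ] Vc r)) (c : (Vc r ≃ₗ[ℂ] Vc r) → ℂ)
    (α : (Vc r ≃ₗ[ℂ] Vc r) → Vc r) (v : Vc r) : Wc r →ₗ[ℂ] Wc r :=
  ∑ t ∈ T, (c t * coroot (α t) v) • (LinearMap.mulLeft ℂ (wExt (α t)) ∘ₗ (wAct t).toLinearMap)

section Dunkl

variable {T : Finset (Vc r ≃ₗ[ℂ] Vc r)} {c : (Vc r ≃ₗ[ℂ] Vc r) → ℂ}
  {α : (Vc r ≃ₗ[ℂ] Vc r) → Vc r} {nab : (Vc r ≃ₗ[ℂ] Vc r) → Wc r →ₗ[ℂ] Wc r}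

lemma dunkl_apply (ω : Wc r) : dunkl T c nab ω = ∑ s ∈ T, c s • nab s ω := by
  simp [dunkl]

lemma dunklCommutator_apply (v : Vc r) (ω : Wc r) :
    dunklCommutator T c α v ω = ∑ t ∈ T, (c t * coroot (α t) v) • (wExt (α t) * wAct t ω) := by
  simp [dunklCommutator]

lemma dunkl_one (hα : ∀ s ∈ T, IsReflRoot s (α s)) (hnab : ∀ s ∈ T, IsNabla (nab s) s (α s)) :
    dunkl T c nab 1 = 0 := by
  rw [dunkl_apply]
  exact Finset.sum_eq_zero fun s hs => by rw [(hnab s hs).map_one (hα s hs), smul_zero]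

lemma dunkl_wSym_mul (hα : ∀ s ∈ T, IsReflRoot s (α s))
    (hnab : ∀ s ∈ T, IsNabla (nab s) s (α s)) (v : Vc r) (ω : Wc r) :
    dunkl T c nab (wSym v * ω) = wSym v * dunkl T c nab ω + dunklCommutator T c α v ω := by
  simp only [dunkl_apply, dunklCommutator_apply, Finset.mul_sum, ← Finset.sum_add_distrib]
  refine Finset.sum_congr rfl fun s hs => ?_
  rw [(hnab s hs).map_wSym_mul (hα s hs), smul_add, smul_smul, mul_smul_comm]

lemma dunkl_wExt_mul (hα : ∀ s ∈ T, IsReflRoot s (α s))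
    (hnab : ∀ s ∈ T, IsNabla (nab s) s (α s)) (u : Vc r) (ω : Wc r) :
    dunkl T c nab (wExt u * ω) = -(wExt u * dunkl T c nab ω) := by
  simp only [dunkl_apply, Finset.mul_sum, ← Finset.sum_neg_distrib]
  refine Finset.sum_congr rfl fun s hs => ?_
  rw [(hnab s hs).map_wExt_mul (hα s hs), smul_neg, mul_smul_comm]

/-- Conjugation by `t` permutes the `∇ₛ` and preserves `c`. -/
lemma dunkl_wAct (hα : ∀ s ∈ T, IsReflRoot s (α s))
    (hnab : ∀ s ∈ T, IsNabla (nab s) s (α s)) (hTconj : ∀ t ∈ T, ∀ s ∈ T, t * s * t ∈ T)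
    (hcconj : ∀ t ∈ T, ∀ s ∈ T, c (t * s * t) = c s) {t : Vc r ≃ₗ[ℂ] Vc r} (ht : t ∈ T)
    (ω : Wc r) : dunkl T c nab (wAct t ω) = wAct t (dunkl T c nab ω) := by
  have htinv : t⁻¹ = t := (hα t ht).inv_eq
  have hconj (s) (hs : s ∈ T) : nab s (wAct t ω) = wAct t (nab (t * s * t) ω) := by
    have hroot : IsReflRoot (t * s * t) (t (α s)) := by
      simpa only [htinv] using (hα s hs).conj (hα t ht).bil_map_map
    refine (hnab s hs).map_wAct (hα s hs) ?_ ω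
    rw [htinv]
    exact (hnab _ (hTconj t ht s hs)).of_isReflRoot (hα _ (hTconj t ht s hs)) hroot
  have hinvol (s) : t * (t * s * t) * t = s := by
    rw [show t * (t * s * t) * t = (t * t) * s * (t * t) by group, (hα t ht).mul_self, one_mul,
      mul_one]
  simp only [dunkl_apply, map_sum, map_smul]
  refine Finset.sum_nbij' (t * · * t) (t * · * t) (hTconj t ht) (hTconj t ht)
    (fun s _ => hinvol s) (fun s _ => hinvol s) fun s hs => ?_
  rw [hconj s hs, hcconj t ht s hs]

lemma dunkl_dunklCommutator (hα : ∀ s ∈ T, IsReflRoot s (α s))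
    (hnab : ∀ s ∈ T, IsNabla (nab s) s (α s)) (hTconj : ∀ t ∈ T, ∀ s ∈ T, t * s * t ∈ T)
    (hcconj : ∀ t ∈ T, ∀ s ∈ T, c (t * s * t) = c s) (v : Vc r) (ω : Wc r) :
    dunkl T c nab (dunklCommutator T c α v ω) = -dunklCommutator T c α v (dunkl T c nab ω) := by
  simp only [dunklCommutator_apply, map_sum, map_smul, ← Finset.sum_neg_distrib]
  refine Finset.sum_congr rfl fun t ht => ?_
  rw [dunkl_wExt_mul hα hnab, dunkl_wAct hα hnab hTconj hcconj ht, smul_neg]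

theorem dunkl_comp_dunkl (hα : ∀ s ∈ T, IsReflRoot s (α s))
    (hnab : ∀ s ∈ T, IsNabla (nab s) s (α s)) (hTconj : ∀ t ∈ T, ∀ s ∈ T, t * s * t ∈ T)
    (hcconj : ∀ t ∈ T, ∀ s ∈ T, c (t * s * t) = c s) :
    dunkl T c nab ∘ₗ dunkl T c nab = 0 := by
  refine LinearMap.eq_zero_of_map_mul_left_of_adjoin_eq_top _ adjoin_wExt_wSym_eq_top ?_
    (by simp [dunkl_one hα hnab])
  rintro _ (⟨u, rfl⟩ | ⟨v, rfl⟩) ω <;> simp only [LinearMap.comp_apply]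
  · rw [dunkl_wExt_mul hα hnab, map_neg, dunkl_wExt_mul hα hnab, neg_neg]
  · rw [dunkl_wSym_mul hα hnab, map_add, dunkl_wSym_mul hα hnab,
      dunkl_dunklCommutator hα hnab hTconj hcconj, add_neg_cancel_right]

end Dunkl

theorem statement8_general
    -- `W` is a finite irreducible reflection group on `V = ℂ^r` (complexified euclidean space),
    (W : Subgroup (Vc r ≃ₗ[ℂ] Vc r))
    -- `T` is the set of reflections of `W`, generating `W`, with roots `α s`,
    (T : Finset (Vc r ≃ₗ[ℂ] Vc r))
    (hT : ∀ g, g ∈ T ↔ g ∈ W ∧ ∃ a, IsReflRoot g a)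
    (α : (Vc r ≃ₗ[ℂ] Vc r) → Vc r)
    (hα : ∀ s ∈ T, IsReflRoot s (α s))
    -- `ψ₁, …, ψᵣ` are homogeneous generators of `A^W` of degrees `2 ≤ d₁ ≤ … ≤ d_r`,
    (ψ : Fin r → Pc r)
    -- `nab s` is the operator `∇ₛ = (αₛ ⊗ 1)·(1−s)/αₛ` on the Weil algebra, characterized by
    -- `(1 ⊗ αₛ) · ∇ₛ(ω) = (αₛ ⊗ 1) · (ω − s·ω)` (multiplication by `1 ⊗ αₛ` is injective),
    (nab : (Vc r ≃ₗ[ℂ] Vc r) → Wc r →ₗ[ℂ] Wc r)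
    (hnab : ∀ s ∈ T, ∀ ω, ((1 : Ec r) ⊗ₜ[ℂ] linP (α s)) * nab s ω
        = ((exti (α s)) ⊗ₜ[ℂ] (1 : Pc r)) * (ω - wAct s ω))
    -- `c : T → ℂ` is a function constant on conjugacy classes,
    (c : (Vc r ≃ₗ[ℂ] Vc r) → ℂ)
    (hc : ∀ s ∈ T, ∀ w ∈ W, c (w * s * w⁻¹) = c s)
    -- `DcB` is the operator on `B` induced by the Dunkl differential `D_c = ∑_{s∈T} c(s)·∇ₛ`,
    (DcB : Bc ψ →ₗ[ℂ] Bc ψ)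
    (hDcB : ∀ ω : Wc r, DcB (πB ψ ω) = πB ψ (∑ s ∈ T, c s • nab s ω))
 :
    (∀ ω : Wc r, (∑ s ∈ T, c s • nab s (∑ s' ∈ T, c s' • nab s' ω)) = 0)
    ∧ (∀ x : Bc ψ, DcB (DcB x) = 0) := by
  have hTW : ∀ t ∈ T, t ∈ W := fun t ht => ((hT t).mp ht).1
  have hTconj : ∀ t ∈ T, ∀ s ∈ T, t * s * t ∈ T := by
    intro t ht s hs
    have hroot := (hα s hs).conj (hα t ht).bil_map_map
    rw [(hα t ht).inv_eq] at hroot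
    exact (hT _).mpr ⟨mul_mem (mul_mem (hTW t ht) (hTW s hs)) (hTW t ht), _, hroot⟩
  have hcconj : ∀ t ∈ T, ∀ s ∈ T, c (t * s * t) = c s := fun t ht s hs => by
    simpa only [(hα t ht).inv_eq] using hc s hs t (hTW t ht)
  have hW (ω : Wc r) : ∑ s ∈ T, c s • nab s (∑ s' ∈ T, c s' • nab s' ω) = 0 := by
    simpa only [LinearMap.comp_apply, LinearMap.zero_apply, dunkl_apply] using
      LinearMap.congr_fun (dunkl_comp_dunkl hα (fun s hs => hnab s hs) hTconj hcconj) ω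
  refine ⟨hW, fun x => ?_⟩
  obtain ⟨ω, rfl⟩ := RingQuot.mkAlgHom_surjective ℂ (relJ ψ) x
  change DcB (DcB (πB ψ ω)) = 0
  rw [hDcB, hDcB, hW, map_zero]

/-- Proposition 2.6 of De Concini–Papi.
The operator `D_c` satisfies `D_c² = 0`, both as an operator on the Weil algebra `𝒲` and as
an operator on `B`. -/
theorem statement8
    -- `W` is a finite irreducible reflection group on `V = ℂ^r` (complexified euclidean space),
    (W : Subgroup (Vc r ≃ₗ[ℂ] Vc r))
    (hWfin : Finite W)
    (hWorth : ∀ g ∈ W, ∀ x y, bil (g x) (g y) = bil x y)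
    (hWirr : ∀ p : Submodule ℂ (Vc r), (∀ g ∈ W, ∀ v ∈ p, g v ∈ p) → p = ⊥ ∨ p = ⊤)
    -- `T` is the set of reflections of `W`, generating `W`, with roots `α s`,
    (T : Finset (Vc r ≃ₗ[ℂ] Vc r))
    (hT : ∀ g, g ∈ T ↔ g ∈ W ∧ ∃ a, IsReflRoot g a)
    (hWgen : Subgroup.closure (T : Set _) = W)
    (α : (Vc r ≃ₗ[ℂ] Vc r) → Vc r)
    (hα : ∀ s ∈ T, IsReflRoot s (α s))
    -- `ψ₁, …, ψᵣ` are homogeneous generators of `A^W` of degrees `2 ≤ d₁ ≤ … ≤ d_r`,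
    (ψ : Fin r → Pc r) (d : Fin r → ℕ)
    (hψhom : ∀ i, (ψ i).IsHomogeneous (d i))
    (hd2 : ∀ i, 2 ≤ d i) (hdmono : Monotone d)
    (hψinv : ∀ i, ∀ g ∈ W, pAct g (ψ i) = ψ i)
    (hψgen : ∀ q : Pc r, (∀ g ∈ W, pAct g q = q) ↔ q ∈ Algebra.adjoin ℂ (Set.range ψ))
    (hψind : AlgebraicIndependent ℂ ψ)
    -- `nab s` is the operator `∇ₛ = (αₛ ⊗ 1)·(1−s)/αₛ` on the Weil algebra, characterized by
    -- `(1 ⊗ αₛ) · ∇ₛ(ω) = (αₛ ⊗ 1) · (ω − s·ω)` (multiplication by `1 ⊗ αₛ` is injective),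
    (nab : (Vc r ≃ₗ[ℂ] Vc r) → Wc r →ₗ[ℂ] Wc r)
    (hnab : ∀ s ∈ T, ∀ ω, ((1 : Ec r) ⊗ₜ[ℂ] linP (α s)) * nab s ω
        = ((exti (α s)) ⊗ₜ[ℂ] (1 : Pc r)) * (ω - wAct s ω))
    -- `Bact g` is the action of `g` on `B` induced by the action on the Weil algebra,
    (Bact : (Vc r ≃ₗ[ℂ] Vc r) → Bc ψ →ₐ[ℂ] Bc ψ)
    (hBact : ∀ g : Vc r ≃ₗ[ℂ] Vc r, ∀ ω : Wc r, Bact g (πB ψ ω) = πB ψ (wAct g ω))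
    -- `c : T → ℂ` is a function constant on conjugacy classes,
    (c : (Vc r ≃ₗ[ℂ] Vc r) → ℂ)
    (hc : ∀ s ∈ T, ∀ w ∈ W, c (w * s * w⁻¹) = c s)
    -- `DcB` is the operator on `B` induced by the Dunkl differential `D_c = ∑_{s∈T} c(s)·∇ₛ`,
    (DcB : Bc ψ →ₗ[ℂ] Bc ψ)
    (hDcB : ∀ ω : Wc r, DcB (πB ψ ω) = πB ψ (∑ s ∈ T, c s • nab s ω))
 :
    (∀ ω : Wc r, (∑ s ∈ T, c s • nab s (∑ s' ∈ T, c s' • nab s' ω)) = 0)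
    ∧ (∀ x : Bc ψ, DcB (DcB x) = 0) :=
  statement8_general W T hT α hα ψ nab hnab c hc DcB hDcB
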